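/- Let k > 0 and define Ψₙ(x) = A_<·e^{ikx} for x < 0, Ψₙ(x) = T(x/n)·A_>·e^{ikx} + (1 − T(x/n))·A_<·e^{ikx} for x ≥ 0, with T the triangle ramp (T(u)=u on [0,1], T(u)=1 for u>1, T(u)=0 for u<0), and A_<, A_> ∈ ℝ. Then with Ĥ = −(1/2M)∂ₓ² and E = k²/(2M), the L² norm ‖(E − Ĥ)Ψₙ‖₂ tends to 0 as n → ∞, while the current satisfies j(x) = k|A_<|²/M for x < 0 and j(x) = k|A_>|²/M for x > n, independent of n. -/

import Mathlib

open Complex MeasureTheory Filter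

/-- The triangle ramp function: `0` for `u < 0`, `u` on `[0,1]`, `1` for `u > 1`. -/
noncomputable def rampT (u : ℝ) : ℝ := max 0 (min u 1)

section helpers
lemma hasDerivAt_e (k x : ℝ) :
    HasDerivAt (fun y : ℝ => Complex.exp (I * k * y)) (I * k * Complex.exp (I * k * x)) x := by
  have h1 : HasDerivAt (fun y : ℝ => (y : ℂ)) 1 x := by
    simpa using (hasDerivAt_id x).ofReal_comp
  have h2 : HasDerivAt (fun y : ℝ => I * k * (y : ℂ)) (I * k) x := by
    simpa using h1.const_mul (I * (k:ℂ))
  simpa [mul_comm] using h2.cexp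

lemma hasDerivAt_lin (k : ℝ) (c d : ℂ) (x : ℝ) :
    HasDerivAt (fun y : ℝ => (c * y + d) * Complex.exp (I * k * y))
      ((c * (I * k) * x + (d * (I * k) + c)) * Complex.exp (I * k * x)) x := by
  have h1 : HasDerivAt (fun y : ℝ => (y : ℂ)) 1 x := by
    simpa using (hasDerivAt_id x).ofReal_comp
  have h2 : HasDerivAt (fun y : ℝ => c * (y:ℂ) + d) c x := by
    simpa using (h1.const_mul c).add_const d
  have := h2.mul (hasDerivAt_e k x)
  convert this using 1
  · rfl
  · rfl
  ring

lemma deriv_lin (k : ℝ) (c d : ℂ) :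
    deriv (fun y : ℝ => (c * y + d) * Complex.exp (I * k * y)) =
      fun x : ℝ => (c * (I * k) * x + (d * (I * k) + c)) * Complex.exp (I * k * x) := by
  funext x; exact (hasDerivAt_lin k c d x).deriv

lemma deriv2_lin (k : ℝ) (c d : ℂ) (x : ℝ) :
    deriv (deriv (fun y : ℝ => (c * y + d) * Complex.exp (I * k * y))) x =
      ((c * (I * k)) * (I * k) * x + ((d * (I * k) + c) * (I * k) + c * (I * k)))
        * Complex.exp (I * k * x) := by
  rw [deriv_lin]
  exact (hasDerivAt_lin k (c * (I * k)) (d * (I * k) + c) x).deriv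

lemma conj_e_mul_e (k x : ℝ) :
    (starRingEnd ℂ) (Complex.exp (I * k * x)) * Complex.exp (I * k * x) = 1 := by
  rw [← Complex.exp_conj, ← Complex.exp_add, map_mul, map_mul, Complex.conj_I,
    Complex.conj_ofReal, Complex.conj_ofReal]
  ring_nf
  exact Complex.exp_zero

lemma current_eval (k M c x : ℝ) (f : ℝ → ℂ)
    (hval : f x = (c:ℂ) * Complex.exp (I*k*x))
    (hder : deriv f x = (c:ℂ)*(I*k)*Complex.exp (I*k*x)) :
    (1/M) * ((starRingEnd ℂ) (f x) * deriv f x).im = k*c^2/M := by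
  rw [hval, hder, map_mul, Complex.conj_ofReal]
  have h := conj_e_mul_e k x
  have h2 : (c:ℂ) * (starRingEnd ℂ) (Complex.exp (I*k*x)) * ((c:ℂ)*(I*k)*Complex.exp (I*k*x))
      = ((c^2*k : ℝ):ℂ) * I := by
    push_cast
    linear_combination ((c:ℂ)^2*I*k) * h
  rw [h2]
  simp [Complex.mul_im, ← Complex.ofReal_pow]
  ring

lemma D_eval (k M : ℝ) (hM : M ≠ 0) (c d : ℂ) (x : ℝ) (f : ℝ → ℂ)
    (hv : f x = (c * x + d) * Complex.exp (I*k*x))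
    (h2 : deriv (deriv f) x =
      ((c*(I*k))*(I*k)*x + ((d*(I*k)+c)*(I*k) + c*(I*k))) * Complex.exp (I*k*x)) :
    ((k^2/(2*M) : ℝ):ℂ) * f x + deriv (deriv f) x / (2*M) =
      c*(I*k)/M * Complex.exp (I*k*x) := by
  have hM' : (M:ℂ) ≠ 0 := by exact_mod_cast Complex.ofReal_ne_zero.mpr hM
  rw [h2, hv]
  push_cast
  field_simp
  linear_combination ((k:ℂ)^2*(c*x+d)) * Complex.I_mul_I
end helpers

/-- A sequence of states whose `L²` Schrödinger violation (for the free
Hamiltonian `Ĥ = −∂ₓ²/(2M)`, `E = k²/(2M)`) tends to `0`, while the probability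
current retains a fixed jump from `kA_<²/M` (for `x < 0`) to `kA_>²/M`
(for `x > n`). -/


theorem l2_violation_small_current_jump (k M Alt Agt : ℝ) (hk : 0 < k) (hM : 0 < M)
    (Ψ : ℕ → ℝ → ℂ)
    (hΨ : Ψ = fun (n : ℕ) (x : ℝ) =>
      if x < 0 then (Alt : ℂ) * Complex.exp (Complex.I * k * x)
      else ((rampT (x / n) * Agt + (1 - rampT (x / n)) * Alt : ℝ) : ℂ)
        * Complex.exp (Complex.I * k * x))
    (E : ℝ) (hE : E = k ^ 2 / (2 * M))
    (D : ℕ → ℝ → ℂ)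
    (hD : D = fun (n : ℕ) (x : ℝ) =>
      (E : ℂ) * Ψ n x + deriv (deriv (Ψ n)) x / (2 * M))
    (j : ℕ → ℝ → ℝ)
    (hj : j = fun (n : ℕ) (x : ℝ) =>
      (1 / M) * ((starRingEnd ℂ) (Ψ n x) * deriv (Ψ n) x).im) :
    Tendsto (fun n : ℕ => eLpNorm (D n) 2 volume) atTop (nhds 0) ∧
      ∀ n : ℕ, 1 ≤ n →
        (∀ x : ℝ, x < 0 → j n x = k * Alt ^ 2 / M) ∧
        (∀ x : ℝ, (n : ℝ) < x → j n x = k * Agt ^ 2 / M) := by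
  -- local (eventual) descriptions of Ψ on the three regions
  have hA : ∀ (n : ℕ) (x : ℝ), x < 0 →
      Ψ n =ᶠ[nhds x] fun y : ℝ => ((0:ℂ) * y + (Alt:ℂ)) * Complex.exp (I*k*y) := by
    intro n x hx
    filter_upwards [Iio_mem_nhds hx] with y hy
    simp only [hΨ]
    rw [if_pos (show y < 0 from hy)]
    ring
  have hC : ∀ (n : ℕ), 1 ≤ n → ∀ x : ℝ, (n:ℝ) < x →
      Ψ n =ᶠ[nhds x] fun y : ℝ => ((0:ℂ) * y + (Agt:ℂ)) * Complex.exp (I*k*y) := by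
    intro n hn x hx
    filter_upwards [Ioi_mem_nhds hx] with y hy
    have hn0 : (0:ℝ) < n := by exact_mod_cast hn
    have hy' : (n:ℝ) < y := hy
    have hy0 : ¬ y < 0 := by linarith
    have hr : rampT (y / n) = 1 := by
      unfold rampT
      have h1 : (1:ℝ) ≤ y / n := (le_div_iff₀ hn0).mpr (by linarith)
      rw [min_eq_right h1, max_eq_right zero_le_one]
    simp only [hΨ, if_neg hy0, hr]
    push_cast
    ring
  have hB : ∀ (n : ℕ), 1 ≤ n → ∀ x ∈ Set.Ioo (0:ℝ) (n:ℝ),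
      Ψ n =ᶠ[nhds x] fun y : ℝ =>
        ((((Agt - Alt)/n : ℝ):ℂ) * y + (Alt:ℂ)) * Complex.exp (I*k*y) := by
    intro n hn x hx
    filter_upwards [Ioo_mem_nhds hx.1 hx.2] with y hy
    have hn0 : (0:ℝ) < n := by exact_mod_cast hn
    have hy0 : ¬ y < 0 := not_lt.mpr hy.1.le
    have hr : rampT (y / n) = y / n := by
      unfold rampT
      rw [min_eq_left ((div_le_one hn0).mpr hy.2.le),
        max_eq_right (div_nonneg hy.1.le hn0.le)]
    simp only [hΨ, if_neg hy0, hr]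
    push_cast
    have : (n:ℂ) ≠ 0 := by exact_mod_cast hn0.ne'
    field_simp
    ring
  have hMne : M ≠ 0 := hM.ne'
  constructor
  · -- the L² part
    have hbound : ∀ n : ℕ, 1 ≤ n → eLpNorm (D n) 2 volume ≤
        ENNReal.ofReal ((|Agt - Alt| * k / M) / ((n:ℝ) ^ ((1:ℝ)/2))) := by
      intro n hn
      have hn0 : (0:ℝ) < n := by exact_mod_cast hn
      set g : ℝ → ℂ := (Set.Ioo (0:ℝ) (n:ℝ)).indicator
        (fun x => ((((Agt - Alt)/n : ℝ)):ℂ)*(I*k)/M * Complex.exp (I*k*x)) with hg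
      have h0 : volume ({0, (n:ℝ)} : Set ℝ) = 0 :=
        Set.Finite.measure_zero (Set.toFinite _) volume
      have hae : D n =ᵐ[volume] g := by
        filter_upwards [compl_mem_ae_iff.mpr h0] with x hx
        simp only [Set.mem_compl_iff, Set.mem_insert_iff, Set.mem_singleton_iff, not_or] at hx
        rcases lt_trichotomy x 0 with h | h | h
        · have hev := hA n x h
          have hval : Ψ n x = ((0:ℂ) * x + (Alt:ℂ)) * Complex.exp (I*k*x) := hev.eq_of_nhds
          have hd2 := (hev.deriv.deriv_eq).trans (deriv2_lin k 0 (Alt:ℂ) x)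
          have := D_eval k M hMne 0 (Alt:ℂ) x (Ψ n) hval hd2
          rw [hD]
          simp only [hE]
          rw [this, hg]
          rw [Set.indicator_of_notMem (by simp [Set.mem_Ioo]; intro h'; linarith)]
          ring
        · exact absurd h hx.1
        · rcases lt_trichotomy x (n:ℝ) with h' | h' | h'
          · have hev := hB n hn x ⟨h, h'⟩
            have hval : Ψ n x = ((((Agt - Alt)/n : ℝ):ℂ) * x + (Alt:ℂ)) * Complex.exp (I*k*x) :=
              hev.eq_of_nhds
            have hd2 := (hev.deriv.deriv_eq).trans
              (deriv2_lin k (((Agt - Alt)/n : ℝ):ℂ) (Alt:ℂ) x)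
            have := D_eval k M hMne (((Agt - Alt)/n : ℝ):ℂ) (Alt:ℂ) x (Ψ n) hval hd2
            rw [hD]
            simp only [hE]
            rw [this, hg]
            rw [Set.indicator_of_mem (Set.mem_Ioo.mpr ⟨h, h'⟩)
              (fun y : ℝ => ((((Agt - Alt)/n : ℝ)):ℂ)*(I*(k:ℂ))/(M:ℂ) * Complex.exp (I*(k:ℂ)*(y:ℂ)))]
          · exact absurd h' hx.2
          · have hev := hC n hn x h'
            have hval : Ψ n x = ((0:ℂ) * x + (Agt:ℂ)) * Complex.exp (I*k*x) := hev.eq_of_nhds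
            have hd2 := (hev.deriv.deriv_eq).trans (deriv2_lin k 0 (Agt:ℂ) x)
            have := D_eval k M hMne 0 (Agt:ℂ) x (Ψ n) hval hd2
            rw [hD]
            simp only [hE]
            rw [this, hg]
            rw [Set.indicator_of_notMem (by simp [Set.mem_Ioo]; intro h''; linarith)]
            ring
      rw [eLpNorm_congr_ae hae]
      have hC0 : (0:ℝ) ≤ |Agt - Alt| * k / (M * n) := by positivity
      have hle : ∀ x, ‖g x‖ ≤
          ‖(Set.Ioo (0:ℝ) (n:ℝ)).indicator (fun _ => (|Agt - Alt| * k / (M * n) : ℝ)) x‖ := by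
        intro x
        by_cases hx : x ∈ Set.Ioo (0:ℝ) (n:ℝ)
        · rw [hg, Set.indicator_of_mem hx, Set.indicator_of_mem hx]
          have he1 : ‖Complex.exp (I*k*x)‖ = 1 := by
            rw [Complex.norm_exp]
            simp
          rw [norm_mul, he1, mul_one, Real.norm_eq_abs]
          rw [show ((((Agt - Alt)/n : ℝ)):ℂ)*(I*(k:ℂ))/(M:ℂ) =
            (((((Agt - Alt)/(M*n)) * k : ℝ)):ℂ) * I by push_cast; field_simp]
          rw [norm_mul, Complex.norm_I,
            Complex.norm_real, Real.norm_eq_abs, mul_one]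
          apply le_of_eq
          rw [abs_mul, abs_div, abs_of_pos hk,
            _root_.abs_of_pos (by positivity : (0:ℝ) < M*n), _root_.abs_of_nonneg hC0]
          ring
        · rw [hg, Set.indicator_of_notMem hx, Set.indicator_of_notMem hx]
          simp
      refine le_trans (eLpNorm_mono hle) ?_
      rw [eLpNorm_indicator_const measurableSet_Ioo (by norm_num) (by norm_num)]
      have hv : volume (Set.Ioo (0:ℝ) (n:ℝ)) = ENNReal.ofReal n := by
        rw [Real.volume_Ioo]; norm_num
      rw [hv, Real.enorm_eq_ofReal hC0]
      have htr : (1/(2:ENNReal).toReal) = ((1:ℝ)/2) := by norm_num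
      rw [htr, ENNReal.ofReal_rpow_of_nonneg hn0.le (by norm_num : (0:ℝ) ≤ 1/2),
        ← ENNReal.ofReal_mul hC0]
      apply ENNReal.ofReal_le_ofReal
      apply le_of_eq
      have hrp : (0:ℝ) < (n:ℝ) ^ ((1:ℝ)/2) := Real.rpow_pos_of_pos hn0 _
      have hsq : (n:ℝ) ^ ((1:ℝ)/2) * (n:ℝ) ^ ((1:ℝ)/2) = (n:ℝ) := by
        rw [← Real.rpow_add hn0]; norm_num
      field_simp
      linear_combination |Agt - Alt| * hsq
    have h2 : Tendsto (fun n:ℕ =>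
        ENNReal.ofReal ((|Agt - Alt| * k / M) / ((n:ℝ) ^ ((1:ℝ)/2)))) atTop (nhds 0) := by
      have h1 : Tendsto (fun n:ℕ => (|Agt - Alt| * k / M) / ((n:ℝ) ^ ((1:ℝ)/2))) atTop (nhds 0) :=
        Tendsto.div_atTop tendsto_const_nhds
          ((tendsto_rpow_atTop (by norm_num)).comp tendsto_natCast_atTop_atTop)
      have := (ENNReal.continuous_ofReal.tendsto 0).comp h1
      simpa [Function.comp_def] using this
    refine tendsto_of_tendsto_of_tendsto_of_le_of_le' tendsto_const_nhds h2
      (Eventually.of_forall fun n => zero_le) ?_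
    filter_upwards [eventually_ge_atTop 1] with n hn using hbound n hn
  · -- the current part
    intro n hn
    constructor
    · intro x hx
      have hev := hA n x hx
      have hval : Ψ n x = (Alt:ℂ) * Complex.exp (I*k*x) := by
        rw [hev.eq_of_nhds]; ring
      have hder : deriv (Ψ n) x = (Alt:ℂ)*(I*k)*Complex.exp (I*k*x) := by
        rw [hev.deriv_eq, deriv_lin]; ring
      simp only [hj]
      exact current_eval k M Alt x (Ψ n) hval hder
    · intro x hx
      have hev := hC n hn x hx
      have hval : Ψ n x = (Agt:ℂ) * Complex.exp (I*k*x) := by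
        rw [hev.eq_of_nhds]; ring
      have hder : deriv (Ψ n) x = (Agt:ℂ)*(I*k)*Complex.exp (I*k*x) := by
        rw [hev.deriv_eq, deriv_lin]; ring
      simp only [hj]
      exact current_eval k M Agt x (Ψ n) hval hder
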